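/- arXiv:1706.05905 — 6 statements merged into one kernel-verified Lean document; each statement's English description precedes it below -/
import Mathlib

section
/- Every wv-path along a finite union ⋃ᵢ₌₁ⁿ (Eᵢ × Fᵢ) of 'rectangle' relations of length ℓ > n contains a wv-path along the same relation of length at most n. -/
/-!
If a path along `⋃ i, E i × F i` has more than `n` edges, two of its edges `(w_a, w_{a+1})` and
`(w_b, w_{b+1})` with `a < b` lie in the same rectangle `E i × F i`. Then `w_a ∈ E i` and
`w_{b+1} ∈ F i`, so `(w_a, w_{b+1})` is an edge as well and the detour `w_{a+1}, …, w_b` can be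
cut out. The result is a shorter sublist with the same endpoints, and sublists of paths are paths.
Iterating gives a path with at most `n` edges.
-/

namespace List

variable {α : Type*}

theorem Sublist.dropLast {l₁ l₂ : List α} (h : l₁ <+ l₂) :
    l₁.dropLast <+ l₂.dropLast :=
  reverse_sublist.1 (by simpa only [tail_reverse] using h.reverse.tail)

theorem take_append_drop_sublist_of_le (l : List α) {a b : ℕ} (hab : a ≤ b) :
    l.take a ++ l.drop b <+ l := by
  simpa only [take_append_drop] using
    (take_sublist_take_left (l := l) hab).append (Sublist.refl (l.drop b))

theorem head?_take_succ_append {l : List α} (hl : l ≠ []) (l' : List α) (a : ℕ) :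
    (l.take (a + 1) ++ l').head? = l.head? := by
  obtain ⟨x, t, rfl⟩ := exists_cons_of_ne_nil hl
  simp

theorem getLast?_append_drop_of_lt (l l' : List α) {b : ℕ} (hb : b < l.length) :
    (l' ++ l.drop b).getLast? = l.getLast? := by
  rw [getLast?_append_of_ne_nil _ (by simpa using hb), getLast?_drop, if_neg (by omega)]

theorem IsChain.take_succ_append_drop {R : α → α → Prop} {l : List α} (h : l.IsChain R)
    {a b : ℕ} (hb : b < l.length) (hab : a < b) (hR : R l[a] l[b]) :
    (l.take (a + 1) ++ l.drop b).IsChain R := by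
  refine isChain_append.2 ⟨h.take _, h.drop _, ?_⟩
  rintro x hx y hy
  rw [getLast?_take, if_neg (Nat.succ_ne_zero a), Nat.add_sub_cancel,
    getElem?_eq_getElem (by omega)] at hx
  rw [head?_drop, getElem?_eq_getElem hb] at hy
  cases Option.some_inj.1 hx
  cases Option.some_inj.1 hy
  exact hR

end List

section Rectangles

variable {W ι : Type*} [Fintype ι]

def rectRel (E F : ι → Set W) (x y : W) : Prop :=
  ∃ i, x ∈ E i ∧ y ∈ F i

theorem exists_rectRel_shortcut {E F : ι → Set W} {l : List W} (h : l.IsChain (rectRel E F))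
    (hlen : Fintype.card ι + 1 < l.length) :
    ∃ a b, ∃ (_ : a < b) (hb : b + 1 < l.length), rectRel E F l[a] l[b + 1] := by
  have hedge := List.isChain_iff_getElem.1 h
  choose f hfE hfF using fun k : Fin (l.length - 1) => hedge k (by omega)
  obtain ⟨a, b, hne, hfab⟩ :=
    Fintype.exists_ne_map_eq_of_card_lt f (by simp only [Fintype.card_fin]; omega)
  rcases Fin.lt_or_lt_of_ne hne with hab | hab
  · exact ⟨a, b, hab, by omega, f a, hfE a, hfab ▸ hfF b⟩
  · exact ⟨b, a, hab, by omega, f b, hfE b, hfab ▸ hfF a⟩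

theorem exists_sublist_isChain_rectRel_length_le (E F : ι → Set W) (l : List W)
    (h : l.IsChain (rectRel E F)) :
    ∃ p : List W, p.Sublist l ∧ p.IsChain (rectRel E F) ∧ p.head? = l.head? ∧
      p.getLast? = l.getLast? ∧ p.length ≤ Fintype.card ι + 1 := by
  induction hn : l.length using Nat.strong_induction_on generalizing l with
  | _ n ih =>
    by_cases hshort : l.length ≤ Fintype.card ι + 1
    · exact ⟨l, List.Sublist.refl l, h, rfl, rfl, hshort⟩
    obtain ⟨a, b, hab, hb, hR⟩ := exists_rectRel_shortcut h (by omega)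
    set l' := l.take (a + 1) ++ l.drop (b + 1)
    have hl'_shorter : l'.length < n := by
      simp only [l', List.length_append, List.length_take, List.length_drop]
      omega
    obtain ⟨p, hpl', hp, hhead, hlast, hplen⟩ :=
      ih _ hl'_shorter l' (h.take_succ_append_drop hb (by omega) hR) rfl
    refine ⟨p, hpl'.trans (l.take_append_drop_sublist_of_le (by omega)), hp, ?_, ?_, hplen⟩
    · rw [hhead, List.head?_take_succ_append (List.ne_nil_of_length_pos (by omega))]
    · rw [hlast, List.getLast?_append_drop_of_lt _ _ hb]

end Rectangles

theorem path_shortening_general {W : Type*} (n : ℕ) (E F : Fin n → Set W) (w v : W)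
    (l : List W)
    (hchain : l.Chain' (fun x y => ∃ i : Fin n, x ∈ E i ∧ y ∈ F i))
    (hhead : l.head? = some w) (hlast : l.getLast? = some v)
    (hpath : l.tail.Nodup ∧ l.dropLast.Nodup) :
    ∃ p : List W, p.Chain' (fun x y => ∃ i : Fin n, x ∈ E i ∧ y ∈ F i) ∧
      p.head? = some w ∧ p.getLast? = some v ∧
      p.tail.Nodup ∧ p.dropLast.Nodup ∧ p.length ≤ n + 1 := by
  obtain ⟨p, hpl, hp, hphead, hplast, hplen⟩ :=
    exists_sublist_isChain_rectRel_length_le E F l hchain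
  exact ⟨p, hp, hphead.trans hhead, hplast.trans hlast, hpl.tail.nodup hpath.1,
    hpl.dropLast.nodup hpath.2, by simpa only [Fintype.card_fin] using hplen⟩

/-- Every `wv`-path along a finite union `⋃ i, E i × F i` of rectangle relations of
length `ℓ > n` contains a `wv`-path along the same relation of length at most `n`.
(A path is represented by its list of vertices; its length is the number of edges.) -/
theorem path_shortening {W : Type*} (n : ℕ) (E F : Fin n → Set W) (w v : W)
    (ℓ : ℕ) (l : List W)
    (hchain : l.Chain' (fun x y => ∃ i : Fin n, x ∈ E i ∧ y ∈ F i))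
    (hhead : l.head? = some w) (hlast : l.getLast? = some v)
    (hpath : l.tail.Nodup ∧ l.dropLast.Nodup)
    (hlen : l.length = ℓ + 1) (hgt : ℓ > n) :
    ∃ p : List W, p.Chain' (fun x y => ∃ i : Fin n, x ∈ E i ∧ y ∈ F i) ∧
      p.head? = some w ∧ p.getLast? = some v ∧
      p.tail.Nodup ∧ p.dropLast.Nodup ∧ p.length ≤ n + 1 :=
  path_shortening_general n E F w v l hchain hhead hlast hpath
end

section
/- Semantic normal form for the reflexive transitive closure of a finite union of rectangles: let R = ⋃_{i ∈ I} (Eᵢ × Fᵢ) with I finite. Then (x,y) ∈ R* iff x = y, or there exists a finite nonempty sequence s = (s₁,…,sₖ) of elements of I such that x ∈ E_{s₁}, y ∈ F_{sₖ}, and for each 2 ≤ j ≤ k the set F_{s_{j-1}} ∩ E_{s_j} is nonempty. -/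
namespace Relation

variable {W ι : Type*} (E F : ι → Set W)

def RectUnion (a b : W) : Prop := ∃ i, a ∈ E i ∧ b ∈ F i

variable {E F}

theorem transGen_rectUnion_of_isChain {s : List ι} (hs : s ≠ []) {x y : W}
    (hx : x ∈ E (s.head hs)) (hy : y ∈ F (s.getLast hs))
    (hc : s.IsChain fun a b => (F a ∩ E b).Nonempty) :
    TransGen (RectUnion E F) x y := by
  induction s generalizing x with
  | nil => exact absurd rfl hs
  | cons i t ih =>
    cases t with
    | nil => exact TransGen.single ⟨i, hx, hy⟩
    | cons j u =>
      obtain ⟨⟨z, hzF, hzE⟩, hc⟩ := List.isChain_cons_cons.mp hc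
      exact TransGen.head ⟨i, hx, hzF⟩ (ih (List.cons_ne_nil _ _) hzE hy hc)

theorem exists_isChain_of_transGen_rectUnion {x y : W}
    (h : TransGen (RectUnion E F) x y) :
    ∃ (s : List ι) (hs : s ≠ []), x ∈ E (s.head hs) ∧ y ∈ F (s.getLast hs) ∧
      s.IsChain fun a b => (F a ∩ E b).Nonempty := by
  induction h using TransGen.head_induction_on with
  | single hxy =>
    obtain ⟨i, hx, hy⟩ := hxy
    exact ⟨[i], List.cons_ne_nil _ _, hx, hy, List.isChain_singleton i⟩
  | head hxz _ ih =>
    obtain ⟨i, hx, hzF⟩ := hxz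
    obtain ⟨s, hs, hzE, hy, hc⟩ := ih
    refine ⟨i :: s, List.cons_ne_nil _ _, hx, by rwa [List.getLast_cons hs], ?_⟩
    obtain ⟨j, t, rfl⟩ := List.exists_cons_of_ne_nil hs
    exact List.isChain_cons_cons.mpr ⟨⟨_, hzF, hzE⟩, hc⟩

theorem transGen_rectUnion_iff {x y : W} :
    TransGen (RectUnion E F) x y ↔
      ∃ (s : List ι) (hs : s ≠ []), x ∈ E (s.head hs) ∧ y ∈ F (s.getLast hs) ∧
        s.IsChain fun a b => (F a ∩ E b).Nonempty :=
  ⟨exists_isChain_of_transGen_rectUnion, fun ⟨_, hs, hx, hy, hc⟩ =>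
    transGen_rectUnion_of_isChain hs hx hy hc⟩

end Relation

theorem rtc_union_rectangles_normal_form_general {W : Type*} {ι : Type*}
    (E F : ι → Set W) (x y : W) :
    Relation.ReflTransGen (fun a b => ∃ i, a ∈ E i ∧ b ∈ F i) x y ↔
      x = y ∨ ∃ (s : List ι) (h : s ≠ []),
        x ∈ E (s.head h) ∧ y ∈ F (s.getLast h) ∧
        s.Chain' (fun a b => (F a ∩ E b).Nonempty) := by
  rw [Relation.reflTransGen_iff_eq_or_transGen, eq_comm]
  exact or_congr_right Relation.transGen_rectUnion_iff

/-- Semantic normal form for the reflexive transitive closure of a finite union of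
rectangles: `(x,y) ∈ R*` iff `x = y` or there is a nonempty sequence `s` of indices
with `x ∈ E s₁`, `y ∈ F s_k`, and consecutive overlaps `F s_{j-1} ∩ E s_j ≠ ∅`. -/
theorem rtc_union_rectangles_normal_form {W : Type*} {ι : Type*} [Finite ι]
    (E F : ι → Set W) (x y : W) :
    Relation.ReflTransGen (fun a b => ∃ i, a ∈ E i ∧ b ∈ F i) x y ↔
      x = y ∨ ∃ (s : List ι) (h : s ≠ []),
        x ∈ E (s.head h) ∧ y ∈ F (s.getLast h) ∧
        s.Chain' (fun a b => (F a ∩ E b).Nonempty) :=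
  rtc_union_rectangles_normal_form_general E F x y
end

section
/- Feasible neighborhood evidence models are modally equivalent to their relational images: let M = ⟨W, E₀, V⟩ be a neighborhood evidence model with E₀ finite. Interpret the language with □₀φ ('some evidence set containing the current world supports φ') and □φ ('some finite intersection of evidence sets containing the current world supports φ'). In the relational model Rel(M) with evidence orders {R_e : e ∈ E₀} and aggregator given by intersection of all evidence orders, interpret □₀φ as 'some evidence order R has R[w] ⊆ ⟦φ⟧' and □φ as '(⋂ evidence orders)[w] ⊆ ⟦φ⟧'. Then for all formulas φ of the language with p, ¬, ∧, □₀, □, ∀ and all w ∈ W: M,w ⊨ φ iff Rel(M),w ⊨ φ. -/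
/-- Formulas of the static evidence language. -/
inductive EvForm : Type
  | atom : ℕ → EvForm
  | neg : EvForm → EvForm
  | and : EvForm → EvForm → EvForm
  | box0 : EvForm → EvForm
  | box : EvForm → EvForm
  | all : EvForm → EvForm

/-- Neighborhood-evidence semantics: truth set of a formula in a NEL model
`⟨W, E₀, V⟩`. -/
def nelSat {W : Type*} (E₀ : Set (Set W)) (V : ℕ → Set W) : EvForm → Set W
  | .atom p => V p
  | .neg φ => (nelSat E₀ V φ)ᶜ
  | .and φ ψ => nelSat E₀ V φ ∩ nelSat E₀ V ψ
  | .box0 φ => {w | ∃ e ∈ E₀, w ∈ e ∧ e ⊆ nelSat E₀ V φ}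
  | .box φ => {w | ∃ F : Set (Set W), F ⊆ E₀ ∧ F.Finite ∧ w ∈ ⋂₀ F ∧ ⋂₀ F ⊆ nelSat E₀ V φ}
  | .all φ => {_w | nelSat E₀ V φ = Set.univ}

/-- Relational semantics on `Rel(M)`: evidence orders `R_e` (`R_e x y ↔ (x ∈ e → y ∈ e)`)
for `e ∈ E₀`, aggregated by intersection. -/
def relSat {W : Type*} (E₀ : Set (Set W)) (V : ℕ → Set W) : EvForm → Set W
  | .atom p => V p
  | .neg φ => (relSat E₀ V φ)ᶜ
  | .and φ ψ => relSat E₀ V φ ∩ relSat E₀ V ψ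
  | .box0 φ => {w | ∃ e ∈ E₀, {v | w ∈ e → v ∈ e} ⊆ relSat E₀ V φ}
  | .box φ => {w | {v | ∀ e ∈ E₀, w ∈ e → v ∈ e} ⊆ relSat E₀ V φ}
  | .all φ => {_w | relSat E₀ V φ = Set.univ}

/-- Feasible neighborhood evidence models are modally equivalent to their relational
images: for a finite evidence family `E₀` (with `∅ ∉ E₀`, `W ∈ E₀`, `W` nonempty),
every world satisfies the same formulas in `M` and in `Rel(M)`. -/
theorem nel_rel_modal_equiv {W : Type*} [Nonempty W] (E₀ : Set (Set W)) (V : ℕ → Set W)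
    (hfin : E₀.Finite) (hempty : ∅ ∉ E₀) (huniv : Set.univ ∈ E₀) :
    ∀ (φ : EvForm) (w : W), w ∈ nelSat E₀ V φ ↔ w ∈ relSat E₀ V φ := by
  intro φ
  induction φ with
  | atom p => intro w; simp [nelSat, relSat]
  | neg φ ih => intro w; simp [nelSat, relSat, ih w]
  | and φ ψ ih1 ih2 => intro w; simp [nelSat, relSat, ih1 w, ih2 w]
  | all φ ih =>
    have h : nelSat E₀ V φ = relSat E₀ V φ := Set.ext ih
    intro w; simp [nelSat, relSat, h]
  | box0 φ ih =>
    have h : nelSat E₀ V φ = relSat E₀ V φ := Set.ext ih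
    intro w
    simp only [nelSat, relSat, h, Set.mem_setOf_eq]
    constructor
    · rintro ⟨e, he, hwe, hsub⟩
      exact ⟨e, he, fun v hv => hsub (hv hwe)⟩
    · rintro ⟨e, he, hsub⟩
      by_cases hw : w ∈ e
      · exact ⟨e, he, hw, fun v hv => hsub (fun _ => hv)⟩
      · exact ⟨Set.univ, huniv, trivial, fun v _ => hsub (fun hc => absurd hc hw)⟩
  | box φ ih =>
    have h : nelSat E₀ V φ = relSat E₀ V φ := Set.ext ih
    intro w
    simp only [nelSat, relSat, h, Set.mem_setOf_eq]
    constructor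
    · rintro ⟨F, hFE, _, hwF, hsub⟩
      intro v hv
      exact hsub (fun e heF => hv e (hFE heF) (hwF e heF))
    · intro hsub
      exact ⟨{e ∈ E₀ | w ∈ e}, fun e he => he.1, hfin.subset (fun e he => he.1),
        fun e he => he.2, fun v hv => hsub fun e he hwe => hv _ ⟨he, hwe⟩⟩
end

section
/- Modal equivalence fails for non-feasible neighborhood models: let W = ℕ, E₀ = {ℕ ∖ {2n+1} : n ∈ ℕ}, and V(p) = {2n : n ∈ ℕ}. Then in the neighborhood model M = ⟨W, E₀, V⟩ we have M, 0 ⊭ □p (no finite intersection of evidence sets containing 0 is contained in the even numbers), while in the relational model Rel(M) we have Rel(M), 0 ⊨ □p (the intersection of all associated evidence orders at 0 equals the set of even numbers). -/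
/-- Modal equivalence fails for non-feasible neighborhood models: with `W = ℕ`,
`E₀ = {ℕ ∖ {2n+1} : n ∈ ℕ}` and `⟦p⟧ = {2n : n ∈ ℕ}`, we have `M,0 ⊭ □p`
(no finite subfamily `F ⊆ E₀` with `0 ∈ ⋂F ⊆ ⟦p⟧`), while `Rel(M),0 ⊨ □p`
(the intersection of the associated evidence orders at `0` equals `⟦p⟧`). -/
theorem nonfeasible_counterexample :
    (¬ ∃ F : Set (Set ℕ), F ⊆ {s | ∃ n : ℕ, s = {k : ℕ | k ≠ 2 * n + 1}} ∧
        F.Finite ∧ 0 ∈ ⋂₀ F ∧ ⋂₀ F ⊆ {k : ℕ | ∃ n, k = 2 * n}) ∧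
    {v : ℕ | ∀ e ∈ {s : Set ℕ | ∃ n : ℕ, s = {k : ℕ | k ≠ 2 * n + 1}},
        (0 : ℕ) ∈ e → v ∈ e} = {k : ℕ | ∃ n, k = 2 * n} := by
  constructor
  · rintro ⟨F, hsub, hfin, _, hP⟩
    classical
    set g : Set ℕ → ℕ := fun s =>
      if h : ∃ n : ℕ, s = {k : ℕ | k ≠ 2 * n + 1} then h.choose else 0 with hg
    have hgs : ∀ s ∈ F, s = {k : ℕ | k ≠ 2 * (g s) + 1} := by
      intro s hs
      have h : ∃ n : ℕ, s = {k : ℕ | k ≠ 2 * n + 1} := hsub hs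
      simp only [hg]
      rw [dif_pos h]
      exact h.choose_spec
    obtain ⟨M, hM⟩ := (hfin.image g).bddAbove
    have hmem : (2 * (M + 1) + 1) ∈ ⋂₀ F := by
      intro s hs
      rw [hgs s hs]
      have : g s ≤ M := hM ⟨s, hs, rfl⟩
      simp only [Set.mem_setOf_eq]
      omega
    obtain ⟨n, hn⟩ := hP hmem
    omega
  · ext v
    simp only [Set.mem_setOf_eq]
    constructor
    · intro h
      rcases Nat.even_or_odd v with ⟨n, hn⟩ | ⟨n, hn⟩
      · exact ⟨n, by omega⟩
      · exfalso
        have := h {k : ℕ | k ≠ 2 * n + 1} ⟨n, rfl⟩ (by simp)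
        simp only [Set.mem_setOf_eq] at this
        omega
    · rintro ⟨n, hn⟩ e ⟨m, rfl⟩ _
      simp only [Set.mem_setOf_eq]
      omega
end

section
/- For the lexicographic aggregator with a family 𝓡 of preorders, a preorder ⪯ on 𝓡, and two designated maximal elements R_l, R_r (i.e., every other member of 𝓡 is strictly below both R_l and R_r, and nothing is strictly above R_l or R_r except possibly a symmetric top W²): if R_l and R_r are antisymmetric and R_l ∩ R_r is reflexive, then lex(⟨𝓡,⪯⟩) = R_l ∩ R_r, provided the only elements of 𝓡 not strictly below R_l and R_r are in {R_l, R_r, W²} and W² is the total relation. -/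
/-- For the lexicographic aggregator, if `⪯` is the reflexive closure of
`{(R,Q) : R ∈ 𝓡, Q ∈ {R_l, R_r}}`, the relations `R_l, R_r` are antisymmetric
preorders with `R_l ∩ R_r` reflexive, the total relation `W²` is in `𝓡`, and every
member of `𝓡` other than `R_l`, `R_r`, `W²` is strictly below both `R_l` and `R_r`,
then `lex(⟨𝓡,⪯⟩) = R_l ∩ R_r`. -/
theorem lex_eq_inter_of_two_maximal {W : Type*} (𝓡 : Set (W → W → Prop))
    (Rl Rr : W → W → Prop)
    (hRl : Rl ∈ 𝓡) (hRr : Rr ∈ 𝓡) (htop : (fun _ _ : W => True) ∈ 𝓡)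
    (hpre : ∀ R ∈ 𝓡, Reflexive R ∧ Transitive R)
    (hRlAnti : ∀ x y, Rl x y → Rl y x → x = y)
    (hRrAnti : ∀ x y, Rr x y → Rr y x → x = y)
    (hInterRefl : Reflexive (fun x y => Rl x y ∧ Rr x y))
    -- `⪯` is the reflexive closure of `{(R,Q) : R ∈ 𝓡, Q ∈ {R_l, R_r}}`:
    (pl : (W → W → Prop) → (W → W → Prop) → Prop)
    (hpl : ∀ A B, pl A B ↔ (A = B ∨ (A ∈ 𝓡 ∧ (B = Rl ∨ B = Rr))))
    -- every other member of `𝓡` is strictly below both `R_l` and `R_r`: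
    (hbelow : ∀ R ∈ 𝓡, R = Rl ∨ R = Rr ∨ R = (fun _ _ : W => True) ∨
      ((pl R Rl ∧ ¬ pl Rl R) ∧ (pl R Rr ∧ ¬ pl Rr R))) :
    ∀ w v : W,
      (∀ R' ∈ 𝓡, R' w v ∨ ∃ R ∈ 𝓡, (pl R' R ∧ ¬ pl R R') ∧ (R w v ∧ ¬ R v w))
        ↔ (Rl w v ∧ Rr w v) := by
  intro w v
  constructor
  · intro h
    have key : ∀ Q, Q ∈ 𝓡 → (Q = Rl ∨ Q = Rr) → Q w v := by
      intro Q hQ hQeq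
      rcases h Q hQ with hq | ⟨R, hR, ⟨hp, hnp⟩, _⟩
      · exact hq
      · exact absurd ((hpl R Q).mpr (Or.inr ⟨hR, hQeq⟩)) hnp
    exact ⟨key Rl hRl (Or.inl rfl), key Rr hRr (Or.inr rfl)⟩
  · rintro ⟨hl, hr⟩ R' hR'
    rcases hbelow R' hR' with rfl | rfl | rfl | ⟨⟨hpL, hnL⟩, ⟨hpR, hnR⟩⟩
    · exact Or.inl hl
    · exact Or.inl hr
    · exact Or.inl trivial
    · by_cases hvw : Rl v w
      · exact Or.inl ((hRlAnti w v hl hvw) ▸ (hpre R' hR').1 w)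
      · exact Or.inr ⟨Rl, hRl, ⟨hpL, hnL⟩, hl, hvw⟩
end

section
/- Validity of the public announcement reduction axiom for basic evidence in ∩-models: for any ∩-model M, world w, and formulas φ, ψ: M,w ⊨ [!φ]□₀ψ iff M,w ⊨ (φ → □₀(φ → [!φ]ψ)). Here [!φ]χ holds at (M,w) iff M,w ⊨ φ implies M^{!⟦φ⟧}, w ⊨ χ, where M^{!P} restricts the worlds to P and each evidence relation R to R ∩ P². -/
/-- Formulas of the language with atoms, booleans, basic-evidence modality `□₀`,
and public announcement `[!φ]`. -/
inductive PForm : Type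
  | atom : ℕ → PForm
  | neg : PForm → PForm
  | and : PForm → PForm → PForm
  | box0 : PForm → PForm
  | ann : PForm → PForm → PForm

/-- Material implication, defined from `neg` and `and`. -/
def PForm.imp (φ ψ : PForm) : PForm := .neg (.and φ (.neg ψ))

/-- Truth set of a formula in a `∩`-model `⟨W, 𝓡, V⟩` relativized to a current
domain `D ⊆ W`. Restricting the domain to `P` is equivalent to restricting each
evidence relation `R` to `R ∩ P²`, so this captures the update `M^{!P}`. -/
def pSat {W : Type*} (𝓡 : Set (W → W → Prop)) (V : ℕ → Set W) :
    PForm → Set W → Set W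
  | .atom p, D => D ∩ V p
  | .neg φ, D => D \ pSat 𝓡 V φ D
  | .and φ ψ, D => pSat 𝓡 V φ D ∩ pSat 𝓡 V ψ D
  | .box0 φ, D => {w ∈ D | ∃ R ∈ 𝓡, ∀ v ∈ D, R w v → v ∈ pSat 𝓡 V φ D}
  | .ann φ ψ, D => {w ∈ D | w ∈ pSat 𝓡 V φ D → w ∈ pSat 𝓡 V ψ (pSat 𝓡 V φ D)}

/-- Validity of the public announcement reduction axiom for basic evidence in
`∩`-models: `[!φ]□₀ψ ↔ (φ → □₀(φ → [!φ]ψ))`. -/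
theorem announcement_reduction_box0 {W : Type*} (𝓡 : Set (W → W → Prop))
    (V : ℕ → Set W)
    (hpre : ∀ R ∈ 𝓡, Reflexive R ∧ Transitive R)
    (htop : (fun _ _ : W => True) ∈ 𝓡) :
    ∀ (φ ψ : PForm) (w : W),
      w ∈ pSat 𝓡 V (.ann φ (.box0 ψ)) Set.univ ↔
      w ∈ pSat 𝓡 V (φ.imp (.box0 (φ.imp (.ann φ ψ)))) Set.univ := by
  intro φ ψ w
  simp only [PForm.imp, pSat, Set.mem_sep_iff, Set.mem_univ, Set.mem_diff,
    Set.mem_inter_iff, Set.mem_setOf_eq, true_and, not_and, not_not]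
  constructor
  · rintro h hw
    obtain ⟨_, R, hR, hRv⟩ := h hw
    exact ⟨R, hR, fun v _ hwv hv _ => hRv v hv hwv⟩
  · rintro h hw
    obtain ⟨R, hR, hRv⟩ := h hw
    exact ⟨hw, R, hR, fun v hv hwv => hRv v trivial hwv hv hv⟩
end
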